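/- arXiv:2410.09165 — 3 statements merged into one kernel-verified Lean document; each statement's English description precedes it below -/
import Mathlib

section
/- If x* ∈ Ω is a global minimizer of f(x) = h(F(x)) over Ω, then h(F(x*)) ≤ h(F(x*) + J_F(x*)s) for every s ∈ ℝⁿ with x* + s ∈ Ω. -/
open scoped ENNReal

noncomputable section

/-- The `p`-norm on `ℝ^n`, for `p ∈ [1,∞]`. -/
def pNorm (p : ℝ≥0∞) {n : ℕ} (x : Fin n → ℝ) : ℝ :=
  if p = ∞ then ⨆ i, |x i| else (∑ i, |x i| ^ p.toReal) ^ (1 / p.toReal)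

/-- The Euclidean norm on `ℝ^n`. -/
def eucNorm {n : ℕ} (x : Fin n → ℝ) : ℝ := Real.sqrt (∑ i, x i ^ 2)

/-- The operator norm of a matrix, induced by Euclidean norms. -/
def opNorm2 {m n : ℕ} (A : Matrix (Fin m) (Fin n) ℝ) : ℝ :=
  sSup ((fun v => eucNorm (A.mulVec v)) '' {v | eucNorm v ≤ 1})

/-- Forward finite-difference approximation of the Jacobian of `F` at `x` with stepsize `τ`:
the `j`-th column is `(F (x + τ e_j) - F x) / τ`. -/
def fdMatrix {n m : ℕ} (F : (Fin n → ℝ) → (Fin m → ℝ)) (x : Fin n → ℝ) (τ : ℝ) :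
    Matrix (Fin m) (Fin n) ℝ :=
  Matrix.of fun i j => (F (x + Pi.single j τ) i - F x i) / τ

/-- Stationarity measure `ψ_{p,r}(x)`. -/
def psi {n m : ℕ} (Ω : Set (Fin n → ℝ)) (F : (Fin n → ℝ) → (Fin m → ℝ))
    (h : (Fin m → ℝ) → ℝ) (J : (Fin n → ℝ) → Matrix (Fin m) (Fin n) ℝ)
    (p : ℝ≥0∞) (r : ℝ) (x : Fin n → ℝ) : ℝ :=
  r⁻¹ * (h (F x) -
    sInf ((fun s => h (F x + (J x).mulVec s)) '' {s | x + s ∈ Ω ∧ pNorm p s ≤ r}))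

/-- Approximate stationarity measure `η_{p,r}(x; A)`. -/
def eta {n m : ℕ} (Ω : Set (Fin n → ℝ)) (F : (Fin n → ℝ) → (Fin m → ℝ))
    (h : (Fin m → ℝ) → ℝ) (p : ℝ≥0∞) (r : ℝ) (x : Fin n → ℝ)
    (A : Matrix (Fin m) (Fin n) ℝ) : ℝ :=
  r⁻¹ * (h (F x) -
    sInf ((fun s => h (F x + A.mulVec s)) '' {s | x + s ∈ Ω ∧ pNorm p s ≤ r}))

lemma pNorm_le_card_mul_norm (p : ℝ≥0∞) (hp : 1 ≤ p) {m : ℕ} (hm : 1 ≤ m)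
    (z : Fin m → ℝ) : pNorm p z ≤ m * ‖z‖ := by
  have hz : (0:ℝ) ≤ ‖z‖ := norm_nonneg z
  have hm1 : (1:ℝ) ≤ m := by exact_mod_cast hm
  have habs : ∀ i, |z i| ≤ ‖z‖ := fun i => by
    simpa using norm_le_pi_norm z i
  rcases eq_or_ne p ∞ with hpt | hpt
  · simp only [pNorm, hpt, if_true]
    haveI : Nonempty (Fin m) := ⟨⟨0, hm⟩⟩
    refine ciSup_le fun i => (habs i).trans ?_
    nlinarith
  · simp only [pNorm, hpt, if_false]
    have hq : 1 ≤ p.toReal := by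
      have := ENNReal.toReal_mono hpt hp
      simpa using this
    have hq0 : 0 < p.toReal := by linarith
    have hsum : ∑ i, |z i| ^ p.toReal ≤ (m : ℝ) * ‖z‖ ^ p.toReal := by
      calc ∑ i, |z i| ^ p.toReal ≤ ∑ _i : Fin m, ‖z‖ ^ p.toReal := by
            refine Finset.sum_le_sum fun i _ => ?_
            exact Real.rpow_le_rpow (abs_nonneg _) (habs i) hq0.le
        _ = (m : ℝ) * ‖z‖ ^ p.toReal := by
            simp [Finset.sum_const, mul_comm]
    have h1 : (∑ i, |z i| ^ p.toReal) ^ (1 / p.toReal)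
        ≤ ((m : ℝ) * ‖z‖ ^ p.toReal) ^ (1 / p.toReal) :=
      Real.rpow_le_rpow (Finset.sum_nonneg fun i _ => Real.rpow_nonneg (abs_nonneg _) _)
        hsum (by positivity)
    have h2 : ((m : ℝ) * ‖z‖ ^ p.toReal) ^ (1 / p.toReal)
        = (m : ℝ) ^ (1 / p.toReal) * ‖z‖ := by
      rw [Real.mul_rpow (by positivity) (by positivity), one_div,
        Real.rpow_rpow_inv hz hq0.ne']
    have h3 : (m : ℝ) ^ (1 / p.toReal) ≤ m := by
      calc (m:ℝ) ^ (1/p.toReal) ≤ (m:ℝ) ^ (1:ℝ) :=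
            Real.rpow_le_rpow_of_exponent_le hm1 (by rw [div_le_one hq0]; linarith)
        _ = m := Real.rpow_one _
    calc (∑ i, |z i| ^ p.toReal) ^ (1 / p.toReal)
        ≤ ((m : ℝ) * ‖z‖ ^ p.toReal) ^ (1 / p.toReal) := h1
      _ = (m : ℝ) ^ (1 / p.toReal) * ‖z‖ := h2
      _ ≤ (m:ℝ) * ‖z‖ := by nlinarith

set_option maxHeartbeats 1000000 in
/-- Lemma 2.1: a global minimizer of f = h ∘ F on Ω is a stationary point. -/
theorem stmt0
    {n m : ℕ} (hn : 1 ≤ n) (hm : 1 ≤ m) (p : ℝ≥0∞) (hp : 1 ≤ p)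
    (Ω : Set (Fin n → ℝ)) (hΩne : Ω.Nonempty) (hΩcl : IsClosed Ω) (hΩcv : Convex ℝ Ω)
    (F : (Fin n → ℝ) → (Fin m → ℝ)) (J : (Fin n → ℝ) → Matrix (Fin m) (Fin n) ℝ)
    (hJ : ∀ y, HasFDerivAt F (LinearMap.toContinuousLinearMap (Matrix.mulVecLin (J y))) y)
    (LJ : ℝ) (hLJ : 0 < LJ)
    (hJLip : ∀ y z, opNorm2 (J y - J z) ≤ LJ * eucNorm (y - z))
    (h : (Fin m → ℝ) → ℝ) (hconv : ConvexOn ℝ Set.univ h)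
    (Lh : ℝ) (hLh : 0 < Lh)
    (hhLip : ∀ z w, |h z - h w| ≤ Lh * pNorm p (z - w))
    (xstar : Fin n → ℝ) (hxstarΩ : xstar ∈ Ω)
    (hmin : ∀ y ∈ Ω, h (F xstar) ≤ h (F y)) :
    ∀ s : Fin n → ℝ, xstar + s ∈ Ω → h (F xstar) ≤ h (F xstar + (J xstar).mulVec s) := by
  intro s hs
  set A : Fin m → ℝ := (J xstar).mulVec s with hAdef
  set D : ℝ := h (F xstar) - h (F xstar + A) with hDdef
  -- Key inequality for every t ∈ (0,1]
  have key : ∀ t : ℝ, 0 < t → t ≤ 1 →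
      t * D ≤ Lh * pNorm p (F (xstar + t • s) - (F xstar + t • A)) := by
    intro t ht ht1
    have hmem : xstar + t • s ∈ Ω := by
      have := hΩcv hxstarΩ hs (by linarith : (0:ℝ) ≤ 1 - t) ht.le (by ring)
      have heq : (1 - t) • xstar + t • (xstar + s) = xstar + t • s := by
        simp [smul_add, sub_smul, one_smul]; abel
      rwa [heq] at this
    have h1 : h (F xstar) ≤ h (F (xstar + t • s)) := hmin _ hmem
    have h2 : h (F (xstar + t • s)) ≤ h (F xstar + t • A)
        + Lh * pNorm p (F (xstar + t • s) - (F xstar + t • A)) := by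
      have := hhLip (F (xstar + t • s)) (F xstar + t • A)
      have := le_abs_self (h (F (xstar + t • s)) - h (F xstar + t • A))
      linarith
    have h3 : h (F xstar + t • A) ≤ (1 - t) * h (F xstar) + t * h (F xstar + A) := by
      have hc := hconv.2 (Set.mem_univ (F xstar)) (Set.mem_univ (F xstar + A))
        (by linarith : (0:ℝ) ≤ 1 - t) ht.le (by ring)
      have heq : (1 - t) • F xstar + t • (F xstar + A) = F xstar + t • A := by
        simp [smul_add, sub_smul, one_smul]; abel
      rw [heq] at hc
      simpa [smul_eq_mul] using hc
    have hexp : (1 - t) * h (F xstar) = h (F xstar) - t * h (F xstar) := by ring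
    have htD : t * D = t * h (F xstar) - t * h (F xstar + A) := by rw [hDdef]; ring
    linarith
  -- little-o estimate from the derivative
  have hderiv := hJ xstar
  rw [hasFDerivAt_iff_isLittleO_nhds_zero] at hderiv
  have htend : Filter.Tendsto (fun t : ℝ => t • s) (nhds 0) (nhds (0 : Fin n → ℝ)) := by
    have : Continuous (fun t : ℝ => t • s) := continuous_id.smul continuous_const
    simpa using this.tendsto 0
  have hlo := hderiv.comp_tendsto htend
  have hBO : (fun t : ℝ => t • s) =O[nhds 0] (fun t : ℝ => t) :=
    Asymptotics.isBigO_iff.mpr ⟨‖s‖, Filter.Eventually.of_forall fun t => by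
      simp [norm_smul, mul_comm]⟩
  have hlo2 : (fun t : ℝ => F (xstar + t • s) - F xstar -
      (LinearMap.toContinuousLinearMap (Matrix.mulVecLin (J xstar))) (t • s))
      =o[nhds 0] (fun t : ℝ => t) := hlo.trans_isBigO hBO
  -- conclude D ≤ 0
  have hD0 : D ≤ 0 := by
    by_contra hcon
    push_neg at hcon
    have hc : (0:ℝ) < D / (2 * Lh * m) := by
      have hm1 : (1:ℝ) ≤ m := by exact_mod_cast hm
      positivity
    have hev := hlo2.def hc
    rw [Metric.eventually_nhds_iff] at hev
    obtain ⟨δ, hδ, hball⟩ := hev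
    set t : ℝ := min (δ / 2) 1 with htdef
    have ht : 0 < t := lt_min (by linarith) one_pos
    have ht1 : t ≤ 1 := min_le_right _ _
    have htδ : dist t 0 < δ := by
      rw [Real.dist_eq, sub_zero, abs_of_pos ht]
      calc t ≤ δ / 2 := min_le_left _ _
        _ < δ := by linarith
    have hb := hball htδ
    -- identify the little-o expression with our difference
    have hAeq : (LinearMap.toContinuousLinearMap (Matrix.mulVecLin (J xstar))) (t • s)
        = t • A := by
      simp [hAdef, Matrix.mulVec_smul]
    rw [hAeq] at hb
    have heq2 : F (xstar + t • s) - F xstar - t • A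
        = F (xstar + t • s) - (F xstar + t • A) := by abel
    rw [heq2] at hb
    have hnorm : ‖F (xstar + t • s) - (F xstar + t • A)‖ ≤ D / (2 * Lh * m) * t := by
      have : ‖t‖ = t := by rw [Real.norm_eq_abs, abs_of_pos ht]
      rw [this] at hb; exact hb
    have hpn : pNorm p (F (xstar + t • s) - (F xstar + t • A))
        ≤ m * ‖F (xstar + t • s) - (F xstar + t • A)‖ :=
      pNorm_le_card_mul_norm p hp hm _
    have hkey := key t ht ht1
    have hm1 : (1:ℝ) ≤ m := by exact_mod_cast hm
    have hchain : t * D ≤ Lh * (m * (D / (2 * Lh * m) * t)) := by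
      calc t * D ≤ Lh * pNorm p (F (xstar + t • s) - (F xstar + t • A)) := hkey
        _ ≤ Lh * (m * ‖F (xstar + t • s) - (F xstar + t • A)‖) := by
            have hnn : (0:ℝ) ≤ m := by linarith
            nlinarith [hpn, norm_nonneg (F (xstar + t • s) - (F xstar + t • A))]
        _ ≤ Lh * (m * (D / (2 * Lh * m) * t)) := by
            have hnn : (0:ℝ) ≤ Lh * m := by nlinarith
            nlinarith
    have hmne : (m:ℝ) ≠ 0 := by linarith
    have : Lh * (m * (D / (2 * Lh * m) * t)) = t * D / 2 := by
      field_simp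
    rw [this] at hchain
    nlinarith
  rw [hDdef] at hD0
  linarith
end
end

section
/- Let x ∈ Ω, τ > 0, and let A ∈ ℝ^{m×n} be the forward finite-difference Jacobian approximation of F at x with stepsize τ. Then |ψ_{p,r}(x) − η_{p,r}(x;A)| ≤ (L_{h,p} L_J c_{p,2}(m) c_{2,p}(n) √n / 2) τ. -/
open scoped ENNReal

noncomputable section

/-! A first-order Taylor estimate with Lipschitz Jacobian bounds every column of `J x - A` by
`L_J τ / 2` in the Euclidean norm, hence `‖(J x - A) s‖₂ ≤ (L_J τ / 2) ‖s‖₁ ≤ (L_J τ / 2) √n ‖s‖₂`.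
Through the Lipschitz continuity of `h` and the norm-equivalence constants, the two models
`s ↦ h (F x + J x s)` and `s ↦ h (F x + A s)` therefore differ by at most
`L_h c_{p,2} L_J τ √n c_{2,p} r / 2` on the trust region, and the infima over it of two uniformly
close functions are equally close. -/

open scoped Matrix Matrix.Norms.L2Operator

lemma eucNorm_eq_norm_toLp {k : ℕ} (v : Fin k → ℝ) : eucNorm v = ‖WithLp.toLp 2 v‖ := by
  simp [eucNorm, EuclideanSpace.norm_eq]

lemma eucNorm_smul {k : ℕ} (c : ℝ) (v : Fin k → ℝ) : eucNorm (c • v) = |c| * eucNorm v := by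
  rw [eucNorm_eq_norm_toLp, eucNorm_eq_norm_toLp, WithLp.toLp_smul, norm_smul, Real.norm_eq_abs]

lemma eucNorm_neg {k : ℕ} (v : Fin k → ℝ) : eucNorm (-v) = eucNorm v := by
  simp [eucNorm]

lemma eucNorm_single {k : ℕ} (j : Fin k) (c : ℝ) : eucNorm (Pi.single j c) = |c| := by
  rw [eucNorm_eq_norm_toLp, PiLp.toLp_single, PiLp.norm_single, Real.norm_eq_abs]

lemma opNorm2_eq_l2_opNorm {m n : ℕ} (M : Matrix (Fin m) (Fin n) ℝ) : opNorm2 M = ‖M‖ := by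
  rw [Matrix.l2_opNorm_def, ← ContinuousLinearMap.sSup_unitClosedBall_eq_norm, opNorm2]
  congr 1
  ext y
  constructor
  · rintro ⟨v, hv, rfl⟩
    refine ⟨WithLp.toLp 2 v, ?_, ?_⟩
    · simpa [eucNorm_eq_norm_toLp] using hv
    · simp [eucNorm_eq_norm_toLp, Matrix.toLpLin_toLp]
  · rintro ⟨x, hx, rfl⟩
    refine ⟨WithLp.ofLp x, ?_, ?_⟩
    · simpa [eucNorm_eq_norm_toLp] using hx
    · simp [eucNorm_eq_norm_toLp, Matrix.toLpLin_apply]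

lemma eucNorm_mulVec_le_opNorm2 {m n : ℕ} (M : Matrix (Fin m) (Fin n) ℝ) (v : Fin n → ℝ) :
    eucNorm (M *ᵥ v) ≤ opNorm2 M * eucNorm v := by
  simpa [opNorm2_eq_l2_opNorm, eucNorm_eq_norm_toLp] using M.l2_opNorm_mulVec (WithLp.toLp 2 v)

lemma norm_le_half_of_norm_deriv_le_mul {E : Type*} [NormedAddCommGroup E] [NormedSpace ℝ E]
    {φ φ' : ℝ → E} {K : ℝ} (h0 : φ 0 = 0) (hφ : ∀ t, HasDerivAt φ (φ' t) t)
    (hφ' : ∀ t ∈ Set.Ico (0 : ℝ) 1, ‖φ' t‖ ≤ K * t) : ‖φ 1‖ ≤ K / 2 := by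
  have hB : ∀ t : ℝ, HasDerivAt (fun t => K / 2 * t ^ 2) (K * t) t := fun t =>
    ((hasDerivAt_pow 2 t).const_mul (K / 2)).congr_deriv (by push_cast; ring)
  have := image_norm_le_of_norm_deriv_right_le_deriv_boundary
    (fun t _ => (hφ t).continuousAt.continuousWithinAt) (fun t _ => (hφ t).hasDerivWithinAt)
    (by simp [h0]) hB hφ' (Set.right_mem_Icc.mpr zero_le_one)
  simpa using this

lemma eucNorm_sub_sub_mulVec_le {n m : ℕ} {F : (Fin n → ℝ) → (Fin m → ℝ)}
    {J : (Fin n → ℝ) → Matrix (Fin m) (Fin n) ℝ}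
    (hJ : ∀ y, HasFDerivAt F (LinearMap.toContinuousLinearMap (Matrix.mulVecLin (J y))) y)
    {LJ : ℝ} (hJLip : ∀ y z, opNorm2 (J y - J z) ≤ LJ * eucNorm (y - z)) (x u : Fin n → ℝ) :
    eucNorm (F (x + u) - F x - J x *ᵥ u) ≤ LJ / 2 * eucNorm u ^ 2 := by
  let L := (EuclideanSpace.equiv (Fin m) ℝ).symm.toContinuousLinearMap
  let φ : ℝ → EuclideanSpace ℝ (Fin m) := fun t => L (F (x + t • u) - F x - t • J x *ᵥ u)
  have hφ : ∀ t, HasDerivAt φ (L ((J (x + t • u) - J x) *ᵥ u)) t := fun t => by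
    have hline : HasDerivAt (fun t : ℝ => x + t • u) u t := by
      simpa using ((hasDerivAt_id t).smul_const u).const_add x
    have hF := (hJ (x + t • u)).comp_hasDerivAt t hline
    refine (L.hasFDerivAt.comp_hasDerivAt t
      ((hF.sub_const (F x)).sub ((hasDerivAt_id t).smul_const (J x *ᵥ u)))).congr_deriv ?_
    simp [Matrix.sub_mulVec]
  have hφ' : ∀ t ∈ Set.Ico (0 : ℝ) 1,
      ‖L ((J (x + t • u) - J x) *ᵥ u)‖ ≤ LJ * eucNorm u ^ 2 * t := fun t ht => by
    rw [← eucNorm_eq_norm_toLp]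
    calc eucNorm ((J (x + t • u) - J x) *ᵥ u)
        ≤ opNorm2 (J (x + t • u) - J x) * eucNorm u := eucNorm_mulVec_le_opNorm2 _ _
      _ ≤ LJ * eucNorm (x + t • u - x) * eucNorm u := by
          gcongr
          · exact Real.sqrt_nonneg _
          · exact hJLip _ _
      _ = LJ * eucNorm u ^ 2 * t := by
          rw [add_sub_cancel_left, eucNorm_smul, abs_of_nonneg ht.1]; ring
  calc eucNorm (F (x + u) - F x - J x *ᵥ u) = ‖φ 1‖ := by simp [φ, L, eucNorm_eq_norm_toLp]
    _ ≤ LJ * eucNorm u ^ 2 / 2 := norm_le_half_of_norm_deriv_le_mul (by simp [φ]) hφ hφ'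
    _ = LJ / 2 * eucNorm u ^ 2 := by ring

lemma eucNorm_mulVec_le_sum {m n : ℕ} (M : Matrix (Fin m) (Fin n) ℝ) (s : Fin n → ℝ) :
    eucNorm (M *ᵥ s) ≤ ∑ j, eucNorm (M *ᵥ Pi.single j (s j)) := by
  conv_lhs => rw [← Finset.univ_sum_single s, Matrix.mulVec_sum]
  simpa only [eucNorm_eq_norm_toLp, WithLp.toLp_sum] using norm_sum_le _ _

lemma sum_abs_le_sqrt_mul_eucNorm {k : ℕ} (s : Fin k → ℝ) :
    ∑ j, |s j| ≤ Real.sqrt k * eucNorm s := by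
  simpa [eucNorm] using Real.sum_mul_le_sqrt_mul_sqrt Finset.univ (fun _ => (1 : ℝ)) (|s ·|)

section FiniteDifference

variable {n m : ℕ} {F : (Fin n → ℝ) → (Fin m → ℝ)} {J : (Fin n → ℝ) → Matrix (Fin m) (Fin n) ℝ}
  {LJ τ : ℝ}

lemma fdMatrix_mulVec_single (x : Fin n → ℝ) (hτ : τ ≠ 0) (j : Fin n) :
    fdMatrix F x τ *ᵥ Pi.single j τ = F (x + Pi.single j τ) - F x := by
  ext i
  simp [fdMatrix, Matrix.mulVec_single, div_mul_cancel₀ _ hτ]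

lemma eucNorm_sub_fdMatrix_mulVec_single_le
    (hJ : ∀ y, HasFDerivAt F (LinearMap.toContinuousLinearMap (Matrix.mulVecLin (J y))) y)
    (hJLip : ∀ y z, opNorm2 (J y - J z) ≤ LJ * eucNorm (y - z))
    (x : Fin n → ℝ) (hτ : τ ≠ 0) (j : Fin n) :
    eucNorm ((J x - fdMatrix F x τ) *ᵥ Pi.single j τ) ≤ LJ / 2 * τ ^ 2 := by
  rw [Matrix.sub_mulVec, fdMatrix_mulVec_single x hτ, ← eucNorm_neg, neg_sub, sub_sub,
    ← sq_abs, ← eucNorm_single j τ]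
  simpa only [sub_sub] using eucNorm_sub_sub_mulVec_le hJ hJLip x (Pi.single j τ)

lemma eucNorm_sub_fdMatrix_mulVec_le
    (hJ : ∀ y, HasFDerivAt F (LinearMap.toContinuousLinearMap (Matrix.mulVecLin (J y))) y)
    (hLJ : 0 ≤ LJ) (hJLip : ∀ y z, opNorm2 (J y - J z) ≤ LJ * eucNorm (y - z))
    (x : Fin n → ℝ) (hτ : 0 < τ) (s : Fin n → ℝ) :
    eucNorm ((J x - fdMatrix F x τ) *ᵥ s) ≤ LJ * τ / 2 * (Real.sqrt n * eucNorm s) := by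
  set D := J x - fdMatrix F x τ
  have hcol : ∀ j, eucNorm (D *ᵥ Pi.single j (s j)) ≤ LJ * τ / 2 * |s j| := fun j => by
    have hsingle : Pi.single j (s j) = (s j / τ) • Pi.single j τ := by
      rw [← Pi.single_smul', smul_eq_mul, div_mul_cancel₀ _ hτ.ne']
    rw [hsingle, Matrix.mulVec_smul, eucNorm_smul, abs_div, abs_of_pos hτ]
    calc |s j| / τ * eucNorm (D *ᵥ Pi.single j τ) ≤ |s j| / τ * (LJ / 2 * τ ^ 2) := by
          gcongr
          exact eucNorm_sub_fdMatrix_mulVec_single_le hJ hJLip x hτ.ne' j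
      _ = LJ * τ / 2 * |s j| := by field_simp
  calc eucNorm (D *ᵥ s) ≤ ∑ j, eucNorm (D *ᵥ Pi.single j (s j)) := eucNorm_mulVec_le_sum D s
    _ ≤ ∑ j, LJ * τ / 2 * |s j| := Finset.sum_le_sum fun j _ => hcol j
    _ = LJ * τ / 2 * ∑ j, |s j| := by rw [Finset.mul_sum]
    _ ≤ LJ * τ / 2 * (Real.sqrt n * eucNorm s) := by
          gcongr
          exact sum_abs_le_sqrt_mul_eucNorm s

end FiniteDifference

section InfPerturbation

variable {α : Type*} {T : Set α} {f g : α → ℝ} {δ : ℝ}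

lemma BddBelow.image_of_abs_sub_le (hfg : ∀ t ∈ T, |f t - g t| ≤ δ) (hf : BddBelow (f '' T)) :
    BddBelow (g '' T) := by
  obtain ⟨b, hb⟩ := hf
  refine ⟨b - δ, ?_⟩
  rintro _ ⟨t, ht, rfl⟩
  linarith [hb ⟨t, ht, rfl⟩, (abs_le.mp (hfg t ht)).2]

lemma sInf_image_le_sInf_image_add (hT : T.Nonempty) (hfg : ∀ t ∈ T, |f t - g t| ≤ δ)
    (hf : BddBelow (f '' T)) : sInf (f '' T) ≤ sInf (g '' T) + δ := by
  rw [← sub_le_iff_le_add]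
  refine le_csInf (hT.image g) ?_
  rintro _ ⟨t, ht, rfl⟩
  linarith [csInf_le hf ⟨t, ht, rfl⟩, (abs_le.mp (hfg t ht)).2]

lemma abs_sInf_image_sub_sInf_image_le (hT : T.Nonempty) (hfg : ∀ t ∈ T, |f t - g t| ≤ δ) :
    |sInf (f '' T) - sInf (g '' T)| ≤ δ := by
  have hgf : ∀ t ∈ T, |g t - f t| ≤ δ := fun t ht => abs_sub_comm (f t) (g t) ▸ hfg t ht
  by_cases hf : BddBelow (f '' T)
  · have hg := hf.image_of_abs_sub_le hfg
    rw [abs_sub_le_iff]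
    constructor
    · linarith [sInf_image_le_sInf_image_add hT hfg hf]
    · linarith [sInf_image_le_sInf_image_add hT hgf hg]
  · -- both infima are then `Real.sInf`'s junk value `0`
    have hg : ¬BddBelow (g '' T) := fun hg => hf (hg.image_of_abs_sub_le hgf)
    obtain ⟨t, ht⟩ := hT
    rw [Real.sInf_of_not_bddBelow hf, Real.sInf_of_not_bddBelow hg, sub_zero, abs_zero]
    exact (abs_nonneg _).trans (hfg t ht)

end InfPerturbation

lemma pNorm_zero {k : ℕ} {p : ℝ≥0∞} (hp : 1 ≤ p) : pNorm p (0 : Fin k → ℝ) = 0 := by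
  unfold pNorm
  split_ifs with hp_top
  · simp
  · simp [(ENNReal.toReal_pos (one_pos.trans_le hp).ne' hp_top).ne', Real.zero_rpow]

theorem stmt3_general
    {n m : ℕ} (p : ℝ≥0∞) (hp : 1 ≤ p)
    (Ω : Set (Fin n → ℝ))
    (F : (Fin n → ℝ) → (Fin m → ℝ)) (J : (Fin n → ℝ) → Matrix (Fin m) (Fin n) ℝ)
    (hJ : ∀ y, HasFDerivAt F (LinearMap.toContinuousLinearMap (Matrix.mulVecLin (J y))) y)
    (LJ : ℝ) (hLJ : 0 < LJ)
    (hJLip : ∀ y z, opNorm2 (J y - J z) ≤ LJ * eucNorm (y - z))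
    (h : (Fin m → ℝ) → ℝ)
    (Lh : ℝ) (hLh : 0 < Lh)
    (hhLip : ∀ z w, |h z - h w| ≤ Lh * pNorm p (z - w))
    (cnp cpm : ℝ) (hcnp1 : 1 ≤ cnp) (hcpm1 : 1 ≤ cpm)
    (hcnp : ∀ v : Fin n → ℝ, eucNorm v ≤ cnp * pNorm p v)
    (hcpm : ∀ z : Fin m → ℝ, pNorm p z ≤ cpm * eucNorm z)
    (r : ℝ) (hr : 0 < r) (x : Fin n → ℝ) (hx : x ∈ Ω) (τ : ℝ) (hτ : 0 < τ) :
    |psi Ω F h J p r x - eta Ω F h p r x (fdMatrix F x τ)| ≤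
      Lh * LJ * cpm * cnp * Real.sqrt n / 2 * τ := by
  set A := fdMatrix F x τ
  set T := {s | x + s ∈ Ω ∧ pNorm p s ≤ r}
  have hT : T.Nonempty := ⟨0, by simpa [T, pNorm_zero hp] using ⟨hx, hr.le⟩⟩
  have hpt : ∀ s ∈ T, |h (F x + J x *ᵥ s) - h (F x + A *ᵥ s)| ≤
      Lh * (cpm * (LJ * τ / 2 * (Real.sqrt n * (cnp * r)))) := fun s hs => by
    calc |h (F x + J x *ᵥ s) - h (F x + A *ᵥ s)| ≤ Lh * pNorm p ((J x - A) *ᵥ s) := by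
          simpa [Matrix.sub_mulVec] using hhLip (F x + J x *ᵥ s) (F x + A *ᵥ s)
      _ ≤ Lh * (cpm * eucNorm ((J x - A) *ᵥ s)) := by gcongr; exact hcpm _
      _ ≤ Lh * (cpm * (LJ * τ / 2 * (Real.sqrt n * (cnp * r)))) := by
          gcongr
          refine (eucNorm_sub_fdMatrix_mulVec_le hJ hLJ.le hJLip x hτ s).trans ?_
          gcongr
          exact (hcnp s).trans (by gcongr; exact hs.2)
  have hInf := abs_sInf_image_sub_sInf_image_le hT hpt
  rw [psi, eta, ← mul_sub, sub_sub_sub_cancel_left, abs_mul, abs_inv, abs_of_pos hr, abs_sub_comm]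
  calc r⁻¹ * |_| ≤ r⁻¹ * (Lh * (cpm * (LJ * τ / 2 * (Real.sqrt n * (cnp * r))))) := by gcongr
    _ = Lh * LJ * cpm * cnp * Real.sqrt n / 2 * τ := by field_simp

/-- Lemma 2.5: error between ψ and η for the finite-difference matrix. -/
theorem stmt3
    {n m : ℕ} (hn : 1 ≤ n) (hm : 1 ≤ m) (p : ℝ≥0∞) (hp : 1 ≤ p)
    (Ω : Set (Fin n → ℝ)) (hΩne : Ω.Nonempty) (hΩcl : IsClosed Ω) (hΩcv : Convex ℝ Ω)
    (F : (Fin n → ℝ) → (Fin m → ℝ)) (J : (Fin n → ℝ) → Matrix (Fin m) (Fin n) ℝ)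
    (hJ : ∀ y, HasFDerivAt F (LinearMap.toContinuousLinearMap (Matrix.mulVecLin (J y))) y)
    (LJ : ℝ) (hLJ : 0 < LJ)
    (hJLip : ∀ y z, opNorm2 (J y - J z) ≤ LJ * eucNorm (y - z))
    (h : (Fin m → ℝ) → ℝ) (hconv : ConvexOn ℝ Set.univ h)
    (Lh : ℝ) (hLh : 0 < Lh)
    (hhLip : ∀ z w, |h z - h w| ≤ Lh * pNorm p (z - w))
    (cnp cpm : ℝ) (hcnp1 : 1 ≤ cnp) (hcpm1 : 1 ≤ cpm)
    (hcnp : ∀ v : Fin n → ℝ, eucNorm v ≤ cnp * pNorm p v)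
    (hcpm : ∀ z : Fin m → ℝ, pNorm p z ≤ cpm * eucNorm z)
    (r : ℝ) (hr : 0 < r) (x : Fin n → ℝ) (hx : x ∈ Ω) (τ : ℝ) (hτ : 0 < τ) :
    |psi Ω F h J p r x - eta Ω F h p r x (fdMatrix F x τ)| ≤
      Lh * LJ * cpm * cnp * Real.sqrt n / 2 * τ :=
  stmt3_general p hp Ω F J hJ LJ hLJ hJLip h Lh hLh hhLip cnp cpm hcnp1 hcpm1 hcnp hcpm r hr x hx τ
    hτ
end
end

section
/- Let {x_k}, {τ_k}, {Δ_k} (k = 0,...,T) be generated by the TRFD algorithm. Then τ_k √n ≤ Δ_k for all k = 0,...,T. -/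
open scoped ENNReal

noncomputable section

/-- The TRFD algorithm: `x`, `τ`, `Δ`, `A`, `d`, `ρ` are the iterates, finite-difference
stepsizes, trust-region radii, finite-difference Jacobian approximations, trial steps and
ratios generated by TRFD with parameters `ε, σ, α, θ, Δstar` from the point `x 0`. -/
def TRFDrun {n m : ℕ} (Ω : Set (Fin n → ℝ)) (F : (Fin n → ℝ) → (Fin m → ℝ))
    (h : (Fin m → ℝ) → ℝ) (p : ℝ≥0∞)
    (Lh cpm cnp ε σ α θ Δstar : ℝ)
    (x : ℕ → Fin n → ℝ) (τ Δ : ℕ → ℝ) (A : ℕ → Matrix (Fin m) (Fin n) ℝ)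
    (d : ℕ → Fin n → ℝ) (ρ : ℕ → ℝ) : Prop :=
  x 0 ∈ Ω ∧
  τ 0 = ε / (Lh * σ * cpm * cnp * Real.sqrt n) ∧
  τ 0 * Real.sqrt n ≤ Δ 0 ∧ Δ 0 ≤ Δstar ∧
  (∀ k, A k = fdMatrix F (x k) (τ k)) ∧
  (∀ k,
    -- unsuccessful iteration of type I
    (eta Ω F h p Δstar (x k) (A k) < ε / 2 ∧
      x (k + 1) = x k ∧ Δ (k + 1) = Δ k ∧ τ (k + 1) = τ k / 2) ∨
    (ε / 2 ≤ eta Ω F h p Δstar (x k) (A k) ∧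
      -- the trial step is feasible and achieves a `θ`-fraction of the optimal model decrease
      pNorm p (d k) ≤ Δ k ∧ x k + d k ∈ Ω ∧
      θ * (h (F (x k)) -
          sInf ((fun s => h (F (x k) + (A k).mulVec s)) ''
            {s | x k + s ∈ Ω ∧ pNorm p s ≤ Δ k})) ≤
        h (F (x k)) - h (F (x k) + (A k).mulVec (d k)) ∧
      ρ k = (h (F (x k)) - h (F (x k + d k))) /
            (h (F (x k)) - h (F (x k) + (A k).mulVec (d k))) ∧
      -- successful iteration
      ((α ≤ ρ k ∧ x (k + 1) = x k + d k ∧ Δ (k + 1) = min (2 * Δ k) Δstar ∧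
          τ (k + 1) = τ k) ∨
      -- unsuccessful iteration of type II
       (ρ k < α ∧ τ k * Real.sqrt n ≤ Δ k / 2 ∧
          x (k + 1) = x k ∧ Δ (k + 1) = Δ k / 2 ∧ τ (k + 1) = τ k) ∨
      -- unsuccessful iteration of type III
       (ρ k < α ∧ Δ k / 2 < τ k * Real.sqrt n ∧
          x (k + 1) = x k ∧ Δ (k + 1) = Δ k / 2 ∧ τ (k + 1) = τ k / 2))))

/-- Lemma 3.1: in TRFD, τ_k √n ≤ Δ_k for all k. -/
theorem stmt6
    {n m : ℕ} (hn : 1 ≤ n) (hm : 1 ≤ m) (p : ℝ≥0∞) (hp : 1 ≤ p)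
    (Ω : Set (Fin n → ℝ)) (hΩne : Ω.Nonempty) (hΩcl : IsClosed Ω) (hΩcv : Convex ℝ Ω)
    (F : (Fin n → ℝ) → (Fin m → ℝ)) (J : (Fin n → ℝ) → Matrix (Fin m) (Fin n) ℝ)
    (hJ : ∀ y, HasFDerivAt F (LinearMap.toContinuousLinearMap (Matrix.mulVecLin (J y))) y)
    (LJ : ℝ) (hLJ : 0 < LJ)
    (hJLip : ∀ y z, opNorm2 (J y - J z) ≤ LJ * eucNorm (y - z))
    (h : (Fin m → ℝ) → ℝ) (hconv : ConvexOn ℝ Set.univ h)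
    (Lh : ℝ) (hLh : 0 < Lh)
    (hhLip : ∀ z w, |h z - h w| ≤ Lh * pNorm p (z - w))
    (cnp cpm : ℝ) (hcnp1 : 1 ≤ cnp) (hcpm1 : 1 ≤ cpm)
    (hcnp : ∀ v : Fin n → ℝ, eucNorm v ≤ cnp * pNorm p v)
    (hcpm : ∀ z : Fin m → ℝ, pNorm p z ≤ cpm * eucNorm z)
    (ε σ α θ Δstar : ℝ) (hε : 0 < ε) (hσ : 0 < σ)
    (hα0 : 0 < α) (hα1 : α < 1) (hθ0 : 0 < θ) (hθ1 : θ ≤ 1)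
    (x : ℕ → Fin n → ℝ) (τ Δ : ℕ → ℝ) (A : ℕ → Matrix (Fin m) (Fin n) ℝ)
    (d : ℕ → Fin n → ℝ) (ρ : ℕ → ℝ)
    (hrun : TRFDrun Ω F h p Lh cpm cnp ε σ α θ Δstar x τ Δ A d ρ)
    :
    ∀ k : ℕ, τ k * Real.sqrt n ≤ Δ k := by
  obtain ⟨hx0, hτ0, hΔ0, hΔstar0, hA, hstep⟩ := hrun
  have hsn : (0:ℝ) < Real.sqrt n := by
    have : (0:ℝ) < n := by exact_mod_cast Nat.lt_of_lt_of_le Nat.zero_lt_one hn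
    exact Real.sqrt_pos.mpr this
  have hτ0pos : 0 < τ 0 := by
    rw [hτ0]
    apply div_pos hε
    positivity
  have key : ∀ k, 0 < τ k ∧ τ k * Real.sqrt n ≤ Δ k ∧ Δ k ≤ Δstar := by
    intro k
    induction k with
    | zero => exact ⟨hτ0pos, hΔ0, hΔstar0⟩
    | succ k ih =>
      obtain ⟨hτpos, hτΔ, hΔs⟩ := ih
      have hΔpos : 0 < Δ k := lt_of_lt_of_le (by positivity) hτΔ
      rcases hstep k with ⟨_, _, hΔ1, hτ1⟩ | ⟨_, _, _, _, _, hcase⟩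
      · refine ⟨by rw [hτ1]; positivity, ?_, by rw [hΔ1]; exact hΔs⟩
        rw [hτ1, hΔ1]
        nlinarith
      · rcases hcase with ⟨_, _, hΔ1, hτ1⟩ | ⟨_, hhalf, _, hΔ1, hτ1⟩ |
          ⟨_, _, _, hΔ1, hτ1⟩
        · refine ⟨by rw [hτ1]; exact hτpos, ?_, by rw [hΔ1]; exact min_le_right _ _⟩
          rw [hτ1, hΔ1]
          exact le_min (by linarith) (le_trans hτΔ hΔs)
        · exact ⟨by rw [hτ1]; exact hτpos, by rw [hτ1, hΔ1]; exact hhalf,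
            by rw [hΔ1]; linarith⟩
        · refine ⟨by rw [hτ1]; positivity, ?_, by rw [hΔ1]; linarith⟩
          rw [hτ1, hΔ1]
          nlinarith
  exact fun k => (key k).2.1
end
end
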